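/- arXiv:1901.02287 — 4 statements merged into one kernel-verified Lean document; each statement's English description precedes it below -/
import Mathlib

section
/- For every n ≥ 1, every puncturing set X ⊆ {0,…,2^n−1}, every t with 0 ≤ t ≤ n−1, and every ℓ with 0 ≤ ℓ ≤ 2^{n−t−1}−1: Z_t(X) ∩ ((2ℓ+1)·2^t + {0,…,2^t−1}) ⊆ 2^t + (Z_t(X) ∩ (2ℓ·2^t + {0,…,2^t−1})). Equivalently, for every i in the block 2ℓ·2^t + {0,…,2^t−1} (so the t-th binary digit of i is 0), if i + 2^t ∈ Z_t(X) then i ∈ Z_t(X). -/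
/-- Binary domination: every binary digit of `i` is at most the corresponding digit of `j`. -/
def bdom (i j : ℕ) : Prop := ∀ t, i.testBit t = true → j.testBit t = true

instance (i j : ℕ) : Decidable (bdom i j) :=
  decidable_of_iff (i ||| j = j) (by
    constructor
    · intro h t hi
      have h1 : (i ||| j).testBit t = j.testBit t := by rw [h]
      rw [Nat.testBit_or, hi, Bool.true_or] at h1
      exact h1.symm
    · intro h
      apply Nat.eq_of_testBit_eq
      intro t
      rw [Nat.testBit_or]
      cases hi : i.testBit t with
      | true => simp [h t hi]
      | false => simp)

/-- One step of zero-LLR propagation, computing the stage-`t` zero-LLR set from the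
stage-`t+1` zero-LLR set `S`, for a polar code of length `2^n`. -/
def zstep (n t : ℕ) (S : Finset ℕ) : Finset ℕ :=
  (Finset.range (2 ^ n)).filter fun i =>
    if i.testBit t then i ∈ S ∧ i - 2 ^ t ∈ S else i ∈ S ∨ i + 2 ^ t ∈ S

/-- Zero-LLR set at stage `t` for puncturing set `X`, for a polar code of length `2^n`:
`Zstage n X n = X` and `Zstage n X t = zstep n t (Zstage n X (t+1))` for `t < n`. -/
def Zstage (n : ℕ) (X : Finset ℕ) (t : ℕ) : Finset ℕ :=
  if _h : n ≤ t then X else zstep n t (Zstage n X (t + 1))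
termination_by n - t
decreasing_by omega

/-- The incapable set resulting from puncturing set `X`. -/
def Up (n : ℕ) (X : Finset ℕ) : Finset ℕ := Zstage n X 0

theorem Zstage_of_lt {n t : ℕ} (X : Finset ℕ) (h : t < n) :
    Zstage n X t = zstep n t (Zstage n X (t + 1)) := by
  rw [Zstage, dif_neg (Nat.not_le.2 h)]

/-- A zero at the upper input `i + 2^t` of a butterfly forces a zero at its lower input `i`:
the upper output needs both inputs of stage `t + 1` to be zero, and one already suffices below. -/
theorem mem_zstep_of_add_two_pow_mem {n t i : ℕ} {S : Finset ℕ} (hi : i.testBit t = false)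
    (h : i + 2 ^ t ∈ zstep n t S) : i ∈ zstep n t S := by
  have hbit : (i + 2 ^ t).testBit t = true := by
    rw [add_comm, Nat.testBit_two_pow_add_eq, hi, Bool.not_false]
  simp only [zstep, Finset.mem_filter, Finset.mem_range, hbit, if_true,
    Nat.add_sub_cancel] at h
  obtain ⟨hlt, _, hiS⟩ := h
  simp only [zstep, Finset.mem_filter, Finset.mem_range, hi]
  exact ⟨(Nat.le_add_right i _).trans_lt hlt, Or.inl hiS⟩

theorem testBit_eq_false_of_mem_Ico_even_block {j t ℓ : ℕ}
    (hj : j ∈ Finset.Ico (2 * ℓ * 2 ^ t) ((2 * ℓ + 1) * 2 ^ t)) : j.testBit t = false := by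
  obtain ⟨hlo, hhi⟩ := Finset.mem_Ico.1 hj
  rw [Nat.testBit_eq_decide_div_mod_eq, Nat.div_eq_of_lt_le hlo hhi]
  simp

theorem odd_block_zero_subset_even_block_general (n : ℕ) (hn : 1 ≤ n)
    (X : Finset ℕ) (t : ℕ) (ht : t ≤ n - 1) (ℓ : ℕ) :
    Zstage n X t ∩ Finset.Ico ((2 * ℓ + 1) * 2 ^ t) ((2 * ℓ + 2) * 2 ^ t)
      ⊆ (Zstage n X t ∩ Finset.Ico (2 * ℓ * 2 ^ t) ((2 * ℓ + 1) * 2 ^ t)).image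
          (· + 2 ^ t) := by
  intro i hi
  obtain ⟨hiZ, hiBlock⟩ := Finset.mem_inter.1 hi
  have hshift : (Finset.Ico (2 * ℓ * 2 ^ t) ((2 * ℓ + 1) * 2 ^ t)).image (· + 2 ^ t)
      = Finset.Ico ((2 * ℓ + 1) * 2 ^ t) ((2 * ℓ + 2) * 2 ^ t) := by
    rw [Finset.image_add_right_Ico]
    congr 1 <;> ring
  obtain ⟨j, hj, rfl⟩ := Finset.mem_image.1 (hshift ▸ hiBlock)
  refine Finset.mem_image_of_mem _ (Finset.mem_inter.2 ⟨?_, hj⟩)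
  rw [Zstage_of_lt X (by omega)] at hiZ ⊢
  exact mem_zstep_of_add_two_pow_mem (testBit_eq_false_of_mem_Ico_even_block hj) hiZ

/-- at any stage `t ≤ n-1`, the zero-LLR indices of the odd block
`(2ℓ+1)·2^t + {0,…,2^t−1}` are contained in `2^t +` (the zero-LLR indices of the
even block `2ℓ·2^t + {0,…,2^t−1}`). -/
theorem odd_block_zero_subset_even_block (n : ℕ) (hn : 1 ≤ n)
    (X : Finset ℕ) (hX : X ⊆ Finset.range (2 ^ n))
    (t : ℕ) (ht : t ≤ n - 1) (ℓ : ℕ) (hℓ : ℓ ≤ 2 ^ (n - t - 1) - 1) :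
    Zstage n X t ∩ Finset.Ico ((2 * ℓ + 1) * 2 ^ t) ((2 * ℓ + 2) * 2 ^ t)
      ⊆ (Zstage n X t ∩ Finset.Ico (2 * ℓ * 2 ^ t) ((2 * ℓ + 1) * 2 ^ t)).image
          (· + 2 ^ t) :=
  odd_block_zero_subset_even_block_general n hn X t ht ℓ
end

section
/- For every n ≥ 1 and every puncturing set X ⊆ {0,…,2^n−1} that is downward closed under binary domination (j ∈ X and i ⪯ j imply i ∈ X), the zero-LLR set is the same at every decoding stage: Z_t(X) = X for every t with 0 ≤ t ≤ n. -/
/-! A downward-closed `X ⊆ [0, 2^n)` is a fixed point of every propagation step: when bit `t`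
of `i` is `0`, no carry occurs in `i + 2^t`, so `i ⪯ i + 2^t` and the disjunction adds nothing
to `X`; when bit `t` of `i` is `1`, `i - 2^t ⪯ i`, so the conjunction removes nothing from `X`.
Hence every stage set equals `X`. -/

theorem bdom_or_self (i k : ℕ) : bdom i (i ||| k) := fun s hs => by
  rw [Nat.testBit_or, hs, Bool.true_or]

theorem Nat.mod_two_pow_succ_lt_of_testBit_eq_false {i t : ℕ} (h : i.testBit t = false) :
    i % 2 ^ (t + 1) < 2 ^ t := by
  by_contra! hle
  have := Nat.testBit_of_two_pow_le_and_two_pow_add_one_gt hle (Nat.mod_lt _ (Nat.two_pow_pos _))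
  simp [Nat.testBit_mod_two_pow, h] at this

theorem Nat.add_two_pow_eq_or_of_testBit_eq_false {i t : ℕ} (h : i.testBit t = false) :
    i + 2 ^ t = i ||| 2 ^ t := by
  set q := i / 2 ^ (t + 1)
  set r := i % 2 ^ (t + 1)
  have hr : r < 2 ^ t := Nat.mod_two_pow_succ_lt_of_testBit_eq_false h
  have hpow : 2 ^ (t + 1) = 2 ^ t * 2 := pow_succ 2 t
  have hsplit : 2 ^ (t + 1) * q + r = i := Nat.div_add_mod i _
  calc i + 2 ^ t = 2 ^ (t + 1) * q + (r + 2 ^ t) := by omega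
    _ = 2 ^ (t + 1) * q ||| (r + 2 ^ t) := Nat.two_pow_add_eq_or_of_lt (by omega) q
    _ = 2 ^ (t + 1) * q ||| (r ||| 2 ^ t) := by rw [Nat.or_two_pow_eq_add_of_lt hr]
    _ = i ||| 2 ^ t := by
      rw [← Nat.or_assoc, ← Nat.two_pow_add_eq_or_of_lt (by omega) q, hsplit]

theorem bdom_add_two_pow {i t : ℕ} (h : i.testBit t = false) : bdom i (i + 2 ^ t) := by
  rw [Nat.add_two_pow_eq_or_of_testBit_eq_false h]
  exact bdom_or_self i _

theorem Nat.testBit_sub_two_pow_self {i t : ℕ} (h : i.testBit t = true) :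
    (i - 2 ^ t).testBit t = false := by
  have := Nat.testBit_two_pow_add_eq (i - 2 ^ t) t
  rw [Nat.add_sub_cancel' (Nat.ge_two_pow_of_testBit h), h] at this
  simpa using this.symm

theorem bdom_sub_two_pow {i t : ℕ} (h : i.testBit t = true) : bdom (i - 2 ^ t) i := by
  have := bdom_add_two_pow (Nat.testBit_sub_two_pow_self h)
  rwa [Nat.sub_add_cancel (Nat.ge_two_pow_of_testBit h)] at this

theorem zstep_eq_self_of_downward_closed {n t : ℕ} {X : Finset ℕ}
    (hX : X ⊆ Finset.range (2 ^ n)) (hdc : ∀ j ∈ X, ∀ i, bdom i j → i ∈ X) :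
    zstep n t X = X := by
  ext i
  simp only [zstep, Finset.mem_filter, Finset.mem_range]
  constructor
  · rintro ⟨-, hi⟩
    split_ifs at hi with hbit
    · exact hi.1
    · exact hi.elim id fun hi' => hdc _ hi' i (bdom_add_two_pow (by simpa using hbit))
  · intro hi
    refine ⟨Finset.mem_range.mp (hX hi), ?_⟩
    split_ifs with hbit
    · exact ⟨hi, hdc i hi _ (bdom_sub_two_pow hbit)⟩
    · exact Or.inl hi

theorem Zstage_eq_self_of_zstep_eq_self {n : ℕ} {X : Finset ℕ} (h : ∀ t, zstep n t X = X)
    (t : ℕ) : Zstage n X t = X := by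
  rw [Zstage]
  split_ifs
  · rfl
  · rw [Zstage_eq_self_of_zstep_eq_self h (t + 1), h]
termination_by n - t

theorem downward_closed_stage_invariant_general (n : ℕ)
    (X : Finset ℕ) (hX : X ⊆ Finset.range (2 ^ n))
    (hdc : ∀ j ∈ X, ∀ i, bdom i j → i ∈ X)
    (t : ℕ) :
    Zstage n X t = X :=
  Zstage_eq_self_of_zstep_eq_self (fun _ => zstep_eq_self_of_downward_closed hX hdc) t

/-- for a downward-closed puncturing set, the zero-LLR set is the same
at every decoding stage `t ≤ n`. -/
theorem downward_closed_stage_invariant (n : ℕ) (hn : 1 ≤ n)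
    (X : Finset ℕ) (hX : X ⊆ Finset.range (2 ^ n))
    (hdc : ∀ j ∈ X, ∀ i, bdom i j → i ∈ X)
    (t : ℕ) (ht : t ≤ n) :
    Zstage n X t = X :=
  downward_closed_stage_invariant_general n X hX hdc t
end

section
/- For every n ≥ 0 and every shortening set U ⊆ {0,…,2^n−1} that is upward closed under binary domination (j ∈ U, j ⪯ k, and k < 2^n imply k ∈ U), the shortening bit pattern is identical to the resulting fixed bit pattern: X_s(U) = U. -/
/-- Polar encoder `u ↦ u · F₂^{⊗n}` over GF(2), with `F₂ = [[1,0],[1,1]]`: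
`enc 0 u = u`, and `enc (n+1) u` is the concatenation of `enc n (u_L + u_H)`
(on indices `< 2^n`) followed by `enc n u_H` (on indices `2^n, …, 2^(n+1)-1`). -/
def enc : ℕ → (ℕ → ZMod 2) → (ℕ → ZMod 2)
  | 0, u => u
  | n + 1, u => fun j =>
      if j < 2 ^ n then enc n (fun i => u i + u (i + 2 ^ n)) j
      else enc n (fun i => u (i + 2 ^ n)) (j - 2 ^ n)

/-- The fixed bit pattern at the encoder output resulting from shortening the
encoder input bits with indices in `U`. -/
def Xs (n : ℕ) (U : Set ℕ) : Set ℕ :=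
  {j | j < 2 ^ n ∧ ∀ u : ℕ → ZMod 2, (∀ i ∈ U, u i = 0) → enc n u j = 0}

open Finset

/-!
The `(i, j)` entry of `F₂^{⊗n}` is `1` exactly when `j ⪯ i`, so output bit `j` of the encoder is
the sum of the input bits `u i` over the indices `i` dominating `j`.
If `U` is upward closed and `j ∈ U`, all these `u i` are shortened, so the output bit is fixed;
if `j ∉ U`, the unit vector at `j` is admissible and has output bit `1` at `j`.
-/

lemma Nat.testBit_add_two_pow {a n : ℕ} (h : a < 2 ^ n) (t : ℕ) :
    (a + 2 ^ n).testBit t = (a.testBit t || decide (n = t)) := by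
  rw [← Nat.or_two_pow_eq_add_of_lt h, Nat.testBit_or, Nat.testBit_two_pow]

lemma Nat.ne_of_lt_two_pow_of_testBit {a n t : ℕ} (h : a < 2 ^ n) (ht : a.testBit t = true) :
    n ≠ t := by
  rintro rfl
  rw [Nat.testBit_lt_two_pow h] at ht
  exact Bool.false_ne_true ht

lemma bdom_add_two_pow_right_iff {j i n : ℕ} (hj : j < 2 ^ n) (hi : i < 2 ^ n) :
    bdom j (i + 2 ^ n) ↔ bdom j i := by
  refine forall_congr' fun t => imp_congr_right fun ht => ?_
  simp [Nat.testBit_add_two_pow hi, Nat.ne_of_lt_two_pow_of_testBit hj ht]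

lemma bdom_add_two_pow_iff {j i n : ℕ} (hj : j < 2 ^ n) (hi : i < 2 ^ n) :
    bdom (j + 2 ^ n) (i + 2 ^ n) ↔ bdom j i := by
  simp only [bdom, Nat.testBit_add_two_pow hj, Nat.testBit_add_two_pow hi]
  refine ⟨fun h t ht => ?_, fun h t ht => ?_⟩
  · simpa [Nat.ne_of_lt_two_pow_of_testBit hj ht] using h t (by simp [ht])
  · rcases Bool.or_eq_true_iff.mp ht with ht | ht
    · simp [h t ht]
    · simp [ht]

lemma sum_range_two_pow_succ {M : Type*} [AddCommMonoid M] (n : ℕ) (f : ℕ → M) :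
    ∑ i ∈ range (2 ^ (n + 1)), f i = ∑ i ∈ range (2 ^ n), (f i + f (i + 2 ^ n)) := by
  rw [pow_succ, mul_two, sum_range_add, sum_add_distrib]
  simp only [Nat.add_comm (2 ^ n)]

lemma enc_succ_of_lt {n j : ℕ} (u : ℕ → ZMod 2) (hj : j < 2 ^ n) :
    enc (n + 1) u j = enc n (fun i => u i + u (i + 2 ^ n)) j := by
  simp [enc, hj]

lemma enc_succ_add_two_pow (n j : ℕ) (u : ℕ → ZMod 2) :
    enc (n + 1) u (j + 2 ^ n) = enc n (fun i => u (i + 2 ^ n)) j := by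
  simp [enc]

theorem enc_eq_sum_bdom {n j : ℕ} (u : ℕ → ZMod 2) (hj : j < 2 ^ n) :
    enc n u j = ∑ i ∈ range (2 ^ n) with bdom j i, u i := by
  induction n generalizing u j with
  | zero =>
    obtain rfl : j = 0 := by simpa using hj
    simp [enc, bdom]
  | succ n ih =>
    rw [sum_filter, sum_range_two_pow_succ]
    by_cases hlow : j < 2 ^ n
    · rw [enc_succ_of_lt u hlow, ih _ hlow, sum_filter]
      refine sum_congr rfl fun i hi => ?_
      simp only [bdom_add_two_pow_right_iff hlow (mem_range.mp hi), ite_add_ite, add_zero]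
    · obtain ⟨j, rfl⟩ : ∃ j', j = j' + 2 ^ n := ⟨j - 2 ^ n, by omega⟩
      have hj' : j < 2 ^ n := by rw [pow_succ] at hj; omega
      rw [enc_succ_add_two_pow, ih _ hj', sum_filter]
      refine sum_congr rfl fun i hi => ?_
      have hi : i < 2 ^ n := mem_range.mp hi
      have hnot : ¬ bdom (j + 2 ^ n) i := fun h => (Nat.le_of_testBit h).not_gt (by omega)
      simp only [if_neg hnot, zero_add, bdom_add_two_pow_iff hj' hi]

/-- for an upward-closed shortening set, the shortening bit pattern is
identical to the resulting fixed bit pattern: `X_s(U) = U`. -/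
theorem shortening_eq_fixed (n : ℕ) (U : Set ℕ) (hU : ∀ i ∈ U, i < 2 ^ n)
    (huc : ∀ j ∈ U, ∀ k, k < 2 ^ n → bdom j k → k ∈ U) :
    Xs n U = U := by
  ext j
  constructor
  · rintro ⟨hj, hfixed⟩
    by_contra hjU
    have hunit := hfixed (Pi.single j 1) fun i hi =>
      Pi.single_eq_of_ne (ne_of_mem_of_not_mem hi hjU) 1
    rw [enc_eq_sum_bdom _ hj, sum_pi_single', if_pos (mem_filter.mpr ⟨mem_range.mpr hj, fun _ => id⟩)] at hunit
    exact one_ne_zero hunit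
  · intro hjU
    refine ⟨hU j hjU, fun u hu => ?_⟩
    rw [enc_eq_sum_bdom u (hU j hjU)]
    exact sum_eq_zero fun i hi =>
      hu i (huc j hjU i (mem_range.mp (mem_filter.mp hi).1) (mem_filter.mp hi).2)
end

section
/- Let n ≥ 0 and let U ⊆ {0,…,2^n−1} be a shortening set that is upward closed under binary domination (j ∈ U, j ⪯ k, and k < 2^n imply k ∈ U), and let j < 2^n with j ∉ X_s(U). Then there exists a single index k with 0 ≤ k < 2^n and k ∉ U such that j ∈ X_s(U ∪ {k}) if and only if the strictly dominating set of j is already fixed, i.e., Ĝ_j = {k < 2^n : j ≺ k} ⊆ X_s(U). -/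
/-!
Over GF(2), output bit `j` of the polar encoder is the sum of the input bits `u i` over the
indices `i ⪰ j`, so `j ∈ X_s(U)` exactly when every `i ⪰ j` lies in `U`. For upward-closed `U`,
`j ∉ X_s(U)` forces `j ∉ U`; hence the only extra index that can fix `j` is `j` itself, and it
does so iff every strict dominator of `j` lies in `U`, i.e. (by the same characterization) in
`X_s(U)`.
-/

theorem bdom_refl (i : ℕ) : bdom i i := fun _ h => h

theorem bdom_trans {i j k : ℕ} (hij : bdom i j) (hjk : bdom j k) : bdom i k :=
  fun t h => hjk t (hij t h)

theorem bdom_antisymm {i j : ℕ} (hij : bdom i j) (hji : bdom j i) : i = j := by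
  apply Nat.eq_of_testBit_eq
  intro t
  cases hi : i.testBit t <;> cases hj : j.testBit t <;> simp_all [hij t, hji t]

theorem bdom_two_pow_mul_add_iff {n a b x y : ℕ} (hx : x < 2 ^ n) (hy : y < 2 ^ n) :
    bdom (2 ^ n * a + x) (2 ^ n * b + y) ↔ bdom a b ∧ bdom x y := by
  simp only [bdom, Nat.testBit_two_pow_mul_add _ hx, Nat.testBit_two_pow_mul_add _ hy]
  refine ⟨fun h => ⟨fun t ht => ?_, fun t ht => ?_⟩, fun ⟨hab, hxy⟩ t => ?_⟩
  · simpa using h (t + n) (by simpa using ht)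
  · have htn : t < n := (Nat.pow_lt_pow_iff_right (by norm_num)).mp
      ((Nat.ge_two_pow_of_testBit ht).trans_lt hx)
    simpa [htn] using h t (by simpa [htn] using ht)
  · split
    · exact hxy t
    · exact hab (t - n)

theorem bdom_two_pow_add_right_iff {n x y : ℕ} (hx : x < 2 ^ n) (hy : y < 2 ^ n) :
    bdom x (2 ^ n + y) ↔ bdom x y := by
  simpa [bdom] using bdom_two_pow_mul_add_iff (a := 0) (b := 1) hx hy

theorem bdom_two_pow_add_two_pow_add_iff {n x y : ℕ} (hx : x < 2 ^ n) (hy : y < 2 ^ n) :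
    bdom (2 ^ n + x) (2 ^ n + y) ↔ bdom x y := by
  simpa [bdom_refl] using bdom_two_pow_mul_add_iff (a := 1) (b := 1) hx hy

theorem not_bdom_two_pow_add_left {n x y : ℕ} (hx : x < 2 ^ n) (hy : y < 2 ^ n) :
    ¬ bdom (2 ^ n + x) y := fun h =>
  have hone_zero := ((bdom_two_pow_mul_add_iff (a := 1) (b := 0) hx hy).mp (by simpa using h)).1
  absurd (hone_zero 0 rfl) (by simp)

theorem enc_eq_sum (n : ℕ) (u : ℕ → ZMod 2) {j : ℕ} (hj : j < 2 ^ n) :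
    enc n u j = ∑ i ∈ Finset.range (2 ^ n), if bdom j i then u i else 0 := by
  induction n generalizing u j with
  | zero =>
    obtain rfl : j = 0 := by simpa using hj
    simp [enc, bdom_refl]
  | succ n ih =>
    rw [pow_succ, mul_two, Finset.sum_range_add]
    rcases lt_or_ge j (2 ^ n) with hlow | hhigh
    · have hdom : ∀ i ∈ Finset.range (2 ^ n), bdom j (2 ^ n + i) ↔ bdom j i :=
        fun i hi => bdom_two_pow_add_right_iff hlow (Finset.mem_range.mp hi)
      rw [Finset.sum_congr rfl fun i hi => if_congr (hdom i hi) rfl rfl]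
      simp only [enc, if_pos hlow, ih _ hlow, ← Finset.sum_add_distrib, ite_add_zero, add_comm (2 ^ n)]
    · obtain ⟨j, rfl⟩ := Nat.exists_eq_add_of_le hhigh
      have hj : j < 2 ^ n := by rw [pow_succ, mul_two] at hj; omega
      have hnot : ∀ i ∈ Finset.range (2 ^ n), ¬ bdom (2 ^ n + j) i :=
        fun i hi => not_bdom_two_pow_add_left hj (Finset.mem_range.mp hi)
      have hdom : ∀ i ∈ Finset.range (2 ^ n), bdom (2 ^ n + j) (2 ^ n + i) ↔ bdom j i :=
        fun i hi => bdom_two_pow_add_two_pow_add_iff hj (Finset.mem_range.mp hi)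
      simp only [enc, if_neg (Nat.not_lt.mpr hhigh), Nat.add_sub_cancel_left, ih _ hj,
        Finset.sum_ite_of_false hnot, Finset.sum_const_zero, zero_add, add_comm _ (2 ^ n),
        Finset.sum_congr rfl fun i hi => if_congr (hdom i hi) rfl rfl]

theorem enc_single {n i j : ℕ} (hi : i < 2 ^ n) (hj : j < 2 ^ n) :
    enc n (Pi.single i 1) j = if bdom j i then 1 else 0 := by
  rw [enc_eq_sum n _ hj, Finset.sum_eq_single_of_mem i (Finset.mem_range.mpr hi)]
  · simp
  · intro k _ hki
    simp [hki]

theorem mem_Xs_iff {n : ℕ} {U : Set ℕ} {j : ℕ} :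
    j ∈ Xs n U ↔ j < 2 ^ n ∧ ∀ i, i < 2 ^ n → bdom j i → i ∈ U := by
  refine and_congr_right fun hj => ⟨fun h i hi hji => ?_, fun h u hu => ?_⟩
  · by_contra hiU
    have hsingle := h (Pi.single i 1) fun k hk => Pi.single_eq_of_ne (ne_of_mem_of_not_mem hk hiU) 1
    simp [enc_single hi hj, hji] at hsingle
  · rw [enc_eq_sum n u hj]
    refine Finset.sum_eq_zero fun i hi => ?_
    split_ifs with hji
    · exact hu i (h i (Finset.mem_range.mp hi) hji)
    · rfl

theorem mem_of_mem_Xs {n : ℕ} {U : Set ℕ} {j : ℕ} (h : j ∈ Xs n U) : j ∈ U :=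
  (mem_Xs_iff.mp h).2 j (mem_Xs_iff.mp h).1 (bdom_refl j)

theorem mem_Xs_of_mem {n : ℕ} {U : Set ℕ} (huc : ∀ j ∈ U, ∀ k, k < 2 ^ n → bdom j k → k ∈ U)
    {j : ℕ} (hj : j < 2 ^ n) (hjU : j ∈ U) : j ∈ Xs n U :=
  mem_Xs_iff.mpr ⟨hj, huc j hjU⟩

theorem eq_of_mem_Xs_union_singleton {n : ℕ} {U : Set ℕ} {j k : ℕ} (hjU : j ∉ U)
    (h : j ∈ Xs n (U ∪ {k})) : j = k :=
  (mem_of_mem_Xs h).resolve_left hjU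

theorem mem_Xs_union_singleton_self_iff {n : ℕ} {U : Set ℕ} {j : ℕ} (hj : j < 2 ^ n) :
    j ∈ Xs n (U ∪ {j}) ↔ ∀ i, i < 2 ^ n → bdom j i → i ≠ j → i ∈ U := by
  simp only [mem_Xs_iff, hj, true_and, Set.mem_union, Set.mem_singleton_iff]
  exact forall₃_congr fun i _ _ => or_iff_not_imp_right

theorem strict_dominators_mem_Xs_iff {n : ℕ} {U : Set ℕ} {j : ℕ} :
    (∀ k, k < 2 ^ n → bdom j k → k ≠ j → k ∈ Xs n U) ↔
      ∀ k, k < 2 ^ n → bdom j k → k ≠ j → k ∈ U := by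
  refine ⟨fun h k hk hjk hkj => mem_of_mem_Xs (h k hk hjk hkj), fun h k hk hjk hkj => ?_⟩
  refine mem_Xs_iff.mpr ⟨hk, fun i hi hki => h i hi (bdom_trans hjk hki) ?_⟩
  rintro rfl
  exact hkj (bdom_antisymm hki hjk)

theorem single_extra_shortening_iff_general (n : ℕ) (U : Set ℕ)
    (huc : ∀ j ∈ U, ∀ k, k < 2 ^ n → bdom j k → k ∈ U)
    (j : ℕ) (hj : j < 2 ^ n) (hjX : j ∉ Xs n U) :
    (∃ k, k < 2 ^ n ∧ k ∉ U ∧ j ∈ Xs n (U ∪ {k})) ↔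
      ∀ k, k < 2 ^ n → bdom j k → k ≠ j → k ∈ Xs n U := by
  have hjU : j ∉ U := fun h => hjX (mem_Xs_of_mem huc hj h)
  calc (∃ k, k < 2 ^ n ∧ k ∉ U ∧ j ∈ Xs n (U ∪ {k}))
      ↔ j ∈ Xs n (U ∪ {j}) := by
        refine ⟨fun ⟨k, _, _, hk⟩ => ?_, fun h => ⟨j, hj, hjU, h⟩⟩
        rwa [← eq_of_mem_Xs_union_singleton hjU hk] at hk
    _ ↔ ∀ k, k < 2 ^ n → bdom j k → k ≠ j → k ∈ U := mem_Xs_union_singleton_self_iff hj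
    _ ↔ ∀ k, k < 2 ^ n → bdom j k → k ≠ j → k ∈ Xs n U := strict_dominators_mem_Xs_iff.symm

/-- for upward-closed `U` and `j ∉ X_s(U)`, output bit `j` can be fixed
by shortening one additional input bit iff every bit strictly dominating `j` is
already fixed. -/
theorem single_extra_shortening_iff (n : ℕ) (U : Set ℕ) (hU : ∀ i ∈ U, i < 2 ^ n)
    (huc : ∀ j ∈ U, ∀ k, k < 2 ^ n → bdom j k → k ∈ U)
    (j : ℕ) (hj : j < 2 ^ n) (hjX : j ∉ Xs n U) :
    (∃ k, k < 2 ^ n ∧ k ∉ U ∧ j ∈ Xs n (U ∪ {k})) ↔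
      ∀ k, k < 2 ^ n → bdom j k → k ≠ j → k ∈ Xs n U :=
  single_extra_shortening_iff_general n U huc j hj hjX
end
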